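/- For any N-database K-message private information retrieval code with N ≥ 3 and any k ∈ {1,...,K-1}, the quantities T^k := H(A_1^[k],...,A_N^[k] | W_1,...,W_k, F) and V^k := (1/N)Σ_{n=1}^N H(A_{1:n-1,n+1:N}^[k], S_n | W_1,...,W_k, F) satisfy V^k/(N-2) + N^{K-k-1}·T^k ≥ ((N^{K-k} - 1)/(N(N-1)))·L log₂|X| + ((K-k)/(N-2))·L log₂|X|. -/

import Mathlib

open scoped Classical
open Real

noncomputable section

/-- A probability mass function on a finite sample space. -/
structure FinProb (Ω : Type) [Fintype Ω] where
  p : Ω → ℝ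
  nonneg : ∀ ω, 0 ≤ p ω
  sum_one : ∑ ω, p ω = 1

namespace FinProb

variable {Ω : Type} [Fintype Ω]

/-- The probability of an event. -/
def prob (P : FinProb Ω) (E : Ω → Prop) : ℝ :=
  ∑ ω, if E ω then P.p ω else 0

/-- The Shannon entropy (in bits) of a random variable `Z` (with the usual
convention `0 · log 0 = 0`, automatic since `Real.logb 2 0 = 0`). -/
def entH {σ : Type} (P : FinProb Ω) (Z : Ω → σ) : ℝ :=
  ∑ z ∈ Finset.univ.image Z,
    -(P.prob fun ω => Z ω = z) * Real.logb 2 (P.prob fun ω => Z ω = z)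

/-- The conditional Shannon entropy (in bits) `H(Z | C)`. -/
def condH {σ τ : Type} (P : FinProb Ω) (Z : Ω → σ) (C : Ω → τ) : ℝ :=
  P.entH (fun ω => (Z ω, C ω)) - P.entH C

end FinProb

namespace FinProb
variable {Ω : Type} [Fintype Ω] (P : FinProb Ω)

lemma prob_eq_sum_filter (E : Ω → Prop) :
    P.prob E = ∑ ω ∈ Finset.univ.filter E, P.p ω := by
  rw [prob, Finset.sum_filter]

lemma prob_nonneg (E : Ω → Prop) : 0 ≤ P.prob E := by
  rw [prob_eq_sum_filter]; exact Finset.sum_nonneg fun ω _ => P.nonneg ω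

lemma prob_mono {E E' : Ω → Prop} (h : ∀ ω, E ω → E' ω) : P.prob E ≤ P.prob E' := by
  rw [prob_eq_sum_filter, prob_eq_sum_filter]
  apply Finset.sum_le_sum_of_subset_of_nonneg
  · intro ω hω
    simp only [Finset.mem_filter, Finset.mem_univ, true_and] at hω ⊢
    exact h ω hω
  · exact fun ω _ _ => P.nonneg ω

lemma p_le_prob {σ : Type} (Z : Ω → σ) (ω : Ω) :
    P.p ω ≤ P.prob fun ω' => Z ω' = Z ω := by
  rw [prob_eq_sum_filter]
  refine Finset.single_le_sum (fun ω' _ => P.nonneg ω') ?_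
  simp

/-- Master representation of entropy as a sum over the sample space. -/
lemma entH_eq_sum {σ : Type} (Z : Ω → σ) :
    P.entH Z = ∑ ω, -(P.p ω * Real.logb 2 (P.prob fun ω' => Z ω' = Z ω)) := by
  rw [entH,
    ← Finset.sum_fiberwise_of_maps_to (fun ω _ => Finset.mem_image_of_mem Z (Finset.mem_univ ω))
      (fun ω => -(P.p ω * Real.logb 2 (P.prob fun ω' => Z ω' = Z ω)))]
  refine Finset.sum_congr rfl fun z _ => ?_
  have : ∀ ω ∈ Finset.univ.filter fun ω => Z ω = z,
      -(P.p ω * Real.logb 2 (P.prob fun ω' => Z ω' = Z ω))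
        = -(P.p ω * Real.logb 2 (P.prob fun ω' => Z ω' = z)) := by
    intro ω hω
    simp only [Finset.mem_filter] at hω
    rw [hω.2]
  rw [Finset.sum_congr rfl this, Finset.sum_neg_distrib, ← Finset.sum_mul,
    ← prob_eq_sum_filter, neg_mul]

/-- Summing the fiber probabilities over the image gives 1. -/
lemma sum_prob_image_eq_one {σ : Type} (Z : Ω → σ) :
    ∑ z ∈ Finset.univ.image Z, (P.prob fun ω => Z ω = z) = 1 := by
  have := Finset.sum_fiberwise_of_maps_to
    (fun ω (_ : ω ∈ Finset.univ) => Finset.mem_image_of_mem Z (Finset.mem_univ ω)) P.p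
  rw [← P.sum_one, ← this]
  exact Finset.sum_congr rfl fun z _ => P.prob_eq_sum_filter _

/-- If `Z₁` determines `Z₂`, then `H(Z₂) ≤ H(Z₁)`. -/
lemma entH_le_of_determines {σ τ : Type} {Z₁ : Ω → σ} {Z₂ : Ω → τ}
    (h : ∀ ω ω', Z₁ ω = Z₁ ω' → Z₂ ω = Z₂ ω') : P.entH Z₂ ≤ P.entH Z₁ := by
  rw [entH_eq_sum, entH_eq_sum]
  refine Finset.sum_le_sum fun ω _ => ?_
  rcases eq_or_lt_of_le (P.nonneg ω) with h0 | h0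
  · rw [← h0]; simp
  · have h1 : P.p ω ≤ P.prob fun ω' => Z₁ ω' = Z₁ ω := P.p_le_prob Z₁ ω
    have h2 : (P.prob fun ω' => Z₁ ω' = Z₁ ω) ≤ P.prob fun ω' => Z₂ ω' = Z₂ ω :=
      P.prob_mono fun ω' hω' => h ω' ω hω'
    have hlog : Real.logb 2 (P.prob fun ω' => Z₁ ω' = Z₁ ω)
        ≤ Real.logb 2 (P.prob fun ω' => Z₂ ω' = Z₂ ω) :=
      Real.logb_le_logb_of_le one_lt_two (lt_of_lt_of_le h0 h1) h2
    nlinarith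
  
lemma entH_eq_of_determines {σ τ : Type} {Z₁ : Ω → σ} {Z₂ : Ω → τ}
    (h1 : ∀ ω ω', Z₁ ω = Z₁ ω' → Z₂ ω = Z₂ ω')
    (h2 : ∀ ω ω', Z₂ ω = Z₂ ω' → Z₁ ω = Z₁ ω') : P.entH Z₁ = P.entH Z₂ :=
  le_antisymm (P.entH_le_of_determines h2) (P.entH_le_of_determines h1)

end FinProb

namespace FinProb
variable {Ω : Type} [Fintype Ω] (P : FinProb Ω)

lemma sum_prob_le_prob {τ τ' : Type} (C : Ω → τ) (g : τ → τ') (S : Finset τ) (y : τ')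
    (hS : ∀ c ∈ S, g c = y) :
    ∑ c ∈ S, (P.prob fun ω => C ω = c) ≤ P.prob fun ω => g (C ω) = y := by
  have : ∀ c ∈ S, (P.prob fun ω => C ω = c)
      = ∑ ω ∈ Finset.univ.filter fun ω => C ω = c, P.p ω := fun c _ => P.prob_eq_sum_filter _
  rw [Finset.sum_congr rfl this, ← Finset.sum_biUnion, P.prob_eq_sum_filter]
  · apply Finset.sum_le_sum_of_subset_of_nonneg
    · intro ω hω
      simp only [Finset.mem_biUnion, Finset.mem_filter, Finset.mem_univ, true_and] at hω ⊢
      obtain ⟨c, hc, hωc⟩ := hω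
      rw [hωc]; exact hS c hc
    · exact fun ω _ _ => P.nonneg ω
  · intro a _ b _ hab
    simp only [Function.onFun, Finset.disjoint_left, Finset.mem_filter]
    rintro ω ⟨_, h1⟩ ⟨_, h2⟩
    exact hab (h1 ▸ h2 ▸ rfl)

private lemma key_sum_le_one {σ τ τ' : Type} (Z : Ω → σ) (C : Ω → τ) (g : τ → τ') :
    ∑ ω, P.p ω *
      ((P.prob fun ω' => (Z ω', g (C ω')) = (Z ω, g (C ω)))
        * (P.prob fun ω' => C ω' = C ω) /
      ((P.prob fun ω' => (Z ω', C ω') = (Z ω, C ω))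
        * (P.prob fun ω' => g (C ω') = g (C ω)))) ≤ 1 := by
  classical
  rw [← Finset.sum_fiberwise_of_maps_to
    (fun ω (_ : ω ∈ Finset.univ) =>
      Finset.mem_image_of_mem (fun ω => (Z ω, g (C ω))) (Finset.mem_univ ω))]
  have hBd : ∀ u ∈ Finset.univ.image (fun ω => (Z ω, g (C ω))),
      ∑ ω ∈ Finset.univ.filter (fun ω => (Z ω, g (C ω)) = u),
        P.p ω * ((P.prob fun ω' => (Z ω', g (C ω')) = (Z ω, g (C ω)))
          * (P.prob fun ω' => C ω' = C ω) /
          ((P.prob fun ω' => (Z ω', C ω') = (Z ω, C ω))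
            * (P.prob fun ω' => g (C ω') = g (C ω))))
      ≤ P.prob fun ω => (Z ω, g (C ω)) = u := by
    intro u _
    rw [← Finset.sum_fiberwise_of_maps_to (fun ω hω => Finset.mem_image_of_mem C hω)]
    have inner : ∀ c ∈ (Finset.univ.filter (fun ω => (Z ω, g (C ω)) = u)).image C,
        ∑ ω ∈ (Finset.univ.filter (fun ω => (Z ω, g (C ω)) = u)).filter
            (fun ω => C ω = c),
          P.p ω * ((P.prob fun ω' => (Z ω', g (C ω')) = (Z ω, g (C ω)))
            * (P.prob fun ω' => C ω' = C ω) /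
            ((P.prob fun ω' => (Z ω', C ω') = (Z ω, C ω))
              * (P.prob fun ω' => g (C ω') = g (C ω))))
        ≤ (P.prob fun ω => (Z ω, g (C ω)) = u) *
            ((P.prob fun ω => C ω = c) / (P.prob fun ω => g (C ω) = u.2)) := by
      intro c hc
      obtain ⟨ω₀, hω₀s, hω₀c⟩ := Finset.mem_image.1 hc
      rw [Finset.mem_filter] at hω₀s
      have hgc : g c = u.2 := by rw [← hω₀c]; exact congrArg Prod.snd hω₀s.2
      have hvals : ∀ ω ∈ (Finset.univ.filter (fun ω => (Z ω, g (C ω)) = u)).filter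
          (fun ω => C ω = c),
          P.p ω * ((P.prob fun ω' => (Z ω', g (C ω')) = (Z ω, g (C ω)))
            * (P.prob fun ω' => C ω' = C ω) /
            ((P.prob fun ω' => (Z ω', C ω') = (Z ω, C ω))
              * (P.prob fun ω' => g (C ω') = g (C ω))))
          = P.p ω * ((P.prob fun ω' => (Z ω', g (C ω')) = u)
            * (P.prob fun ω' => C ω' = c) /
            ((P.prob fun ω' => (Z ω', C ω') = (u.1, c))
              * (P.prob fun ω' => g (C ω') = u.2))) := by
        intro ω hω
        simp only [Finset.mem_filter, Finset.mem_univ, true_and] at hω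
        obtain ⟨hωu, hωc⟩ := hω
        have hz : Z ω = u.1 := congrArg Prod.fst hωu
        have hg2 : g (C ω) = u.2 := congrArg Prod.snd hωu
        rw [hωu, hωc, hz, hgc]
      rw [Finset.sum_congr rfl hvals, ← Finset.sum_mul]
      have hsum : ∑ ω ∈ (Finset.univ.filter (fun ω => (Z ω, g (C ω)) = u)).filter
          (fun ω => C ω = c), P.p ω
          = P.prob fun ω' => (Z ω', C ω') = (u.1, c) := by
        rw [P.prob_eq_sum_filter]
        congr 1
        ext ω
        simp only [Finset.mem_filter, Finset.mem_univ, true_and, Prod.mk.injEq]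
        constructor
        · rintro ⟨h1, h3⟩
          exact ⟨congrArg Prod.fst h1, h3⟩
        · rintro ⟨h1, h3⟩
          refine ⟨?_, h3⟩
          rw [Prod.ext_iff]
          exact ⟨h1, by rw [h3, hgc]⟩
      rw [hsum]
      have hAnn : (0:ℝ) ≤ P.prob fun ω' => (Z ω', C ω') = (u.1, c) := P.prob_nonneg _
      have hBnn : (0:ℝ) ≤ P.prob fun ω' => (Z ω', g (C ω')) = u := P.prob_nonneg _
      have hCnn : (0:ℝ) ≤ P.prob fun ω' => C ω' = c := P.prob_nonneg _
      have hDnn : (0:ℝ) ≤ P.prob fun ω' => g (C ω') = u.2 := P.prob_nonneg _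
      rcases eq_or_ne (P.prob fun ω' => (Z ω', C ω') = (u.1, c)) 0 with hA0 | hA0
      · rw [hA0]; simp only [zero_mul]; positivity
      · rw [← mul_div_assoc, mul_div_mul_left _ _ hA0, mul_div_assoc]
    calc ∑ c ∈ (Finset.univ.filter (fun ω => (Z ω, g (C ω)) = u)).image C,
            ∑ ω ∈ (Finset.univ.filter (fun ω => (Z ω, g (C ω)) = u)).filter
              (fun ω => C ω = c),
            P.p ω * ((P.prob fun ω' => (Z ω', g (C ω')) = (Z ω, g (C ω)))
              * (P.prob fun ω' => C ω' = C ω) /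
              ((P.prob fun ω' => (Z ω', C ω') = (Z ω, C ω))
                * (P.prob fun ω' => g (C ω') = g (C ω))))
        ≤ ∑ c ∈ (Finset.univ.filter (fun ω => (Z ω, g (C ω)) = u)).image C,
            (P.prob fun ω => (Z ω, g (C ω)) = u) *
            ((P.prob fun ω => C ω = c) / (P.prob fun ω => g (C ω) = u.2)) :=
          Finset.sum_le_sum inner
      _ = (P.prob fun ω => (Z ω, g (C ω)) = u) / (P.prob fun ω => g (C ω) = u.2) *
            ∑ c ∈ (Finset.univ.filter (fun ω => (Z ω, g (C ω)) = u)).image C,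
              (P.prob fun ω => C ω = c) := by
          rw [Finset.mul_sum]; exact Finset.sum_congr rfl fun c _ => by ring
      _ ≤ P.prob fun ω => (Z ω, g (C ω)) = u := by
          have hBnn : (0:ℝ) ≤ P.prob fun ω => (Z ω, g (C ω)) = u := P.prob_nonneg _
          have hDnn : (0:ℝ) ≤ P.prob fun ω => g (C ω) = u.2 := P.prob_nonneg _
          rcases eq_or_lt_of_le hDnn with hD0 | hD0
          · rw [← hD0, div_zero, zero_mul]; exact hBnn
          · have hSC : ∑ c ∈ (Finset.univ.filter (fun ω => (Z ω, g (C ω)) = u)).image C,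
                (P.prob fun ω => C ω = c) ≤ P.prob fun ω => g (C ω) = u.2 := by
              apply P.sum_prob_le_prob C g _ u.2
              intro c hc
              obtain ⟨ω₀, hω₀s, hω₀c⟩ := Finset.mem_image.1 hc
              rw [Finset.mem_filter] at hω₀s
              rw [← hω₀c]; exact congrArg Prod.snd hω₀s.2
            calc (P.prob fun ω => (Z ω, g (C ω)) = u) / (P.prob fun ω => g (C ω) = u.2) *
                  ∑ c ∈ (Finset.univ.filter (fun ω => (Z ω, g (C ω)) = u)).image C,
                    (P.prob fun ω => C ω = c)
                ≤ (P.prob fun ω => (Z ω, g (C ω)) = u) / (P.prob fun ω => g (C ω) = u.2) *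
                  (P.prob fun ω => g (C ω) = u.2) :=
                  mul_le_mul_of_nonneg_left hSC (by positivity)
              _ = P.prob fun ω => (Z ω, g (C ω)) = u := by field_simp
  calc ∑ u ∈ Finset.univ.image (fun ω => (Z ω, g (C ω))),
          ∑ ω ∈ Finset.univ.filter (fun ω => (Z ω, g (C ω)) = u),
          P.p ω * ((P.prob fun ω' => (Z ω', g (C ω')) = (Z ω, g (C ω)))
            * (P.prob fun ω' => C ω' = C ω) /
            ((P.prob fun ω' => (Z ω', C ω') = (Z ω, C ω))
              * (P.prob fun ω' => g (C ω') = g (C ω))))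
      ≤ ∑ u ∈ Finset.univ.image (fun ω => (Z ω, g (C ω))),
          P.prob fun ω => (Z ω, g (C ω)) = u := Finset.sum_le_sum hBd
    _ = 1 := by
        convert P.sum_prob_image_eq_one (fun ω => (Z ω, g (C ω))) using 2
        congr!

/-- Conditioning on a finer variable gives smaller conditional entropy. -/
lemma condH_comp_cond_le {σ τ τ' : Type} (Z : Ω → σ) (C : Ω → τ) (g : τ → τ') :
    P.condH Z C ≤ P.condH Z (fun ω => g (C ω)) := by
  classical
  have key := P.key_sum_le_one Z C g
  have ptwise : ∀ ω,
      P.p ω * Real.logb 2 (P.prob fun ω' => (Z ω', g (C ω')) = (Z ω, g (C ω)))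
      + P.p ω * Real.logb 2 (P.prob fun ω' => C ω' = C ω)
      - P.p ω * Real.logb 2 (P.prob fun ω' => (Z ω', C ω') = (Z ω, C ω))
      - P.p ω * Real.logb 2 (P.prob fun ω' => g (C ω') = g (C ω))
      ≤ (P.p ω * ((P.prob fun ω' => (Z ω', g (C ω')) = (Z ω, g (C ω)))
          * (P.prob fun ω' => C ω' = C ω) /
          ((P.prob fun ω' => (Z ω', C ω') = (Z ω, C ω))
            * (P.prob fun ω' => g (C ω') = g (C ω)))) - P.p ω) / Real.log 2 := by
    intro ω
    set a := P.prob fun ω' => (Z ω', C ω') = (Z ω, C ω) with ha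
    set b := P.prob fun ω' => (Z ω', g (C ω')) = (Z ω, g (C ω)) with hb
    set c := P.prob fun ω' => C ω' = C ω with hc
    set d := P.prob fun ω' => g (C ω') = g (C ω) with hd
    rcases eq_or_lt_of_le (P.nonneg ω) with h0 | h0
    · rw [← h0]; simp
    · have h1 : 0 < a := lt_of_lt_of_le h0 (P.p_le_prob (fun ω' => (Z ω', C ω')) ω)
      have h3 : 0 < c := lt_of_lt_of_le h0 (P.p_le_prob C ω)
      have h2 : 0 < b := lt_of_lt_of_le h1 (P.prob_mono (by
        intro ω' h; simp only [Prod.mk.injEq] at h ⊢; exact ⟨h.1, by rw [h.2]⟩))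
      have h4 : 0 < d := lt_of_lt_of_le h3 (P.prob_mono (by intro ω' h; rw [h]))
      have ht : 0 < b * c / (a * d) := by positivity
      have hlog2 : 0 < Real.log 2 := Real.log_pos one_lt_two
      have hlogt : Real.log (b * c / (a * d)) ≤ b * c / (a * d) - 1 :=
        Real.log_le_sub_one_of_pos ht
      have hexp : Real.log (b * c / (a * d))
          = Real.log b + Real.log c - Real.log a - Real.log d := by
        rw [Real.log_div (by positivity) (by positivity),
          Real.log_mul (ne_of_gt h2) (ne_of_gt h3),
          Real.log_mul (ne_of_gt h1) (ne_of_gt h4)]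
        ring
      simp only [Real.logb]
      calc P.p ω * (Real.log b / Real.log 2) + P.p ω * (Real.log c / Real.log 2)
            - P.p ω * (Real.log a / Real.log 2) - P.p ω * (Real.log d / Real.log 2)
          = P.p ω * (Real.log b + Real.log c - Real.log a - Real.log d) / Real.log 2 := by
            ring
        _ ≤ P.p ω * (b * c / (a * d) - 1) / Real.log 2 := by
            apply div_le_div_of_nonneg_right ?_ hlog2.le
            rw [← hexp]
            nlinarith
        _ = (P.p ω * (b * c / (a * d)) - P.p ω) / Real.log 2 := by ring
  have hsumpt := Finset.sum_le_sum fun ω (_ : ω ∈ Finset.univ) => ptwise ω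
  have hrhs : ∑ ω, (P.p ω * ((P.prob fun ω' => (Z ω', g (C ω')) = (Z ω, g (C ω)))
      * (P.prob fun ω' => C ω' = C ω) /
      ((P.prob fun ω' => (Z ω', C ω') = (Z ω, C ω))
        * (P.prob fun ω' => g (C ω') = g (C ω)))) - P.p ω) / Real.log 2 ≤ 0 := by
    rw [← Finset.sum_div, Finset.sum_sub_distrib, P.sum_one]
    apply div_nonpos_of_nonpos_of_nonneg
    · linarith [key]
    · exact le_of_lt (Real.log_pos one_lt_two)
  have e1 := P.entH_eq_sum (fun ω => (Z ω, C ω))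
  have e2 := P.entH_eq_sum (fun ω => (Z ω, g (C ω)))
  have e3 := P.entH_eq_sum C
  have e4 := P.entH_eq_sum (fun ω => g (C ω))
  simp only [condH, e1, e2, e3, e4]
  rw [Finset.sum_sub_distrib, Finset.sum_sub_distrib, Finset.sum_add_distrib] at hsumpt
  simp only [Finset.sum_neg_distrib]
  linarith

end FinProb

namespace FinProb
variable {Ω : Type} [Fintype Ω] (P : FinProb Ω)

lemma condH_nonneg {σ τ : Type} (Z : Ω → σ) (C : Ω → τ) : 0 ≤ P.condH Z C :=
  sub_nonneg.2 (P.entH_le_of_determines fun ω ω' h => by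
    simpa using congrArg Prod.snd h)

/-- If `(Z₁, C)` determines `Z₂`, then `H(Z₂|C) ≤ H(Z₁|C)`. -/
lemma condH_le_of_determines {σ σ' τ : Type} {Z₁ : Ω → σ} {Z₂ : Ω → σ'} (C : Ω → τ)
    (h : ∀ ω ω', Z₁ ω = Z₁ ω' → C ω = C ω' → Z₂ ω = Z₂ ω') :
    P.condH Z₂ C ≤ P.condH Z₁ C := by
  apply sub_le_sub_right
  apply P.entH_le_of_determines
  intro ω ω' hh
  have h1 : Z₁ ω = Z₁ ω' := congrArg Prod.fst hh
  have h2 : C ω = C ω' := congrArg Prod.snd hh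
  rw [Prod.ext_iff]
  exact ⟨h ω ω' h1 h2, h2⟩

lemma condH_eq_of_determines {σ σ' τ : Type} {Z₁ : Ω → σ} {Z₂ : Ω → σ'} (C : Ω → τ)
    (h1 : ∀ ω ω', Z₁ ω = Z₁ ω' → C ω = C ω' → Z₂ ω = Z₂ ω')
    (h2 : ∀ ω ω', Z₂ ω = Z₂ ω' → C ω = C ω' → Z₁ ω = Z₁ ω') :
    P.condH Z₁ C = P.condH Z₂ C :=
  le_antisymm (P.condH_le_of_determines C h2) (P.condH_le_of_determines C h1)

/-- If `C₁` and `C₂` mutually determine each other, conditioning on them is the same. -/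
lemma condH_congr_cond {σ τ τ' : Type} (Z : Ω → σ) {C₁ : Ω → τ} {C₂ : Ω → τ'}
    (h1 : ∀ ω ω', C₁ ω = C₁ ω' → C₂ ω = C₂ ω')
    (h2 : ∀ ω ω', C₂ ω = C₂ ω' → C₁ ω = C₁ ω') :
    P.condH Z C₁ = P.condH Z C₂ := by
  unfold condH
  have e1 : P.entH (fun ω => (Z ω, C₁ ω)) = P.entH (fun ω => (Z ω, C₂ ω)) :=
    P.entH_eq_of_determines (Z₁ := fun ω => (Z ω, C₁ ω)) (Z₂ := fun ω => (Z ω, C₂ ω))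
      (fun ω ω' hh => by
        have hh' : (Z ω, C₁ ω) = (Z ω', C₁ ω') := hh
        show (Z ω, C₂ ω) = (Z ω', C₂ ω')
        obtain ⟨hz, hc⟩ := Prod.mk.inj hh'
        rw [Prod.ext_iff]
        exact ⟨hz, h1 ω ω' hc⟩)
      (fun ω ω' hh => by
        have hh' : (Z ω, C₂ ω) = (Z ω', C₂ ω') := hh
        show (Z ω, C₁ ω) = (Z ω', C₁ ω')
        obtain ⟨hz, hc⟩ := Prod.mk.inj hh'
        rw [Prod.ext_iff]
        exact ⟨hz, h2 ω ω' hc⟩)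
  have e2 : P.entH C₁ = P.entH C₂ := P.entH_eq_of_determines h1 h2
  rw [e1, e2]

/-- Chain rule: `H(Z₁, Z₂ | C) = H(Z₁ | Z₂, C) + H(Z₂ | C)`. -/
lemma condH_chain {σ₁ σ₂ τ : Type} (Z₁ : Ω → σ₁) (Z₂ : Ω → σ₂) (C : Ω → τ) :
    P.condH (fun ω => (Z₁ ω, Z₂ ω)) C
      = P.condH Z₁ (fun ω => (Z₂ ω, C ω)) + P.condH Z₂ C := by
  unfold condH
  have e : P.entH (fun ω => ((Z₁ ω, Z₂ ω), C ω))
      = P.entH (fun ω => (Z₁ ω, (Z₂ ω, C ω))) := by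
    apply P.entH_eq_of_determines <;>
    · intro ω ω' hh
      simp only [Prod.mk.injEq] at hh ⊢
      tauto
  rw [e]; ring

/-- Conditioning on a finer variable gives smaller conditional entropy, general form. -/
lemma condH_mono_cond [Nonempty Ω] {σ τ τ' : Type} (Z : Ω → σ) {C₁ : Ω → τ} {C₂ : Ω → τ'}
    (h : ∀ ω ω', C₁ ω = C₁ ω' → C₂ ω = C₂ ω') :
    P.condH Z C₁ ≤ P.condH Z C₂ := by
  have hg : ∃ g : τ → τ', ∀ ω, g (C₁ ω) = C₂ ω := by
    refine ⟨fun c => if hc : ∃ ω, C₁ ω = c then C₂ hc.choose else C₂ (Classical.arbitrary Ω), ?_⟩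
    intro ω
    have hc : ∃ ω', C₁ ω' = C₁ ω := ⟨ω, rfl⟩
    dsimp only
    rw [dif_pos hc]
    exact h hc.choose ω hc.choose_spec
  obtain ⟨g, hgC⟩ := hg
  calc P.condH Z C₁ ≤ P.condH Z (fun ω => g (C₁ ω)) := P.condH_comp_cond_le Z C₁ g
    _ = P.condH Z C₂ := by rw [funext hgC]

/-- Subadditivity given common conditioning. -/
lemma condH_pair_le [Nonempty Ω] {σ₁ σ₂ τ : Type} (Z₁ : Ω → σ₁) (Z₂ : Ω → σ₂) (C : Ω → τ) :
    P.condH (fun ω => (Z₁ ω, Z₂ ω)) C ≤ P.condH Z₁ C + P.condH Z₂ C := by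
  rw [P.condH_chain Z₁ Z₂ C]
  have : P.condH Z₁ (fun ω => (Z₂ ω, C ω)) ≤ P.condH Z₁ C :=
    P.condH_mono_cond Z₁ fun ω ω' hh => congrArg Prod.snd hh
  linarith

/-- A constant random variable has zero conditional entropy. -/
lemma condH_const {σ τ : Type} (C : Ω → τ) (z : σ) :
    P.condH (fun _ => z) C = 0 := by
  unfold condH
  rw [P.entH_eq_of_determines (Z₂ := C) (fun ω ω' h => congrArg Prod.snd h)
    (fun ω ω' h => by rw [Prod.ext_iff]; exact ⟨rfl, h⟩), sub_self]

/-- Subadditivity for a list of random variables. -/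
lemma condH_list_le [Nonempty Ω] {ι σ τ : Type} (V : ι → Ω → σ) (C : Ω → τ) :
    ∀ l : List ι, P.condH (fun ω => l.map (fun n => V n ω)) C
      ≤ (l.map fun n => P.condH (V n) C).sum := by
  intro l
  induction l with
  | nil => simp only [List.map_nil, List.sum_nil]; rw [P.condH_const]
  | cons n l ih =>
    have e : P.condH (fun ω => (n :: l).map (fun m => V m ω)) C
        = P.condH (fun ω => (V n ω, l.map (fun m => V m ω))) C := by
      apply P.condH_eq_of_determines
      · intro ω ω' hh _
        simp only [List.map_cons, List.cons.injEq] at hh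
        rw [Prod.ext_iff]; exact ⟨hh.1, hh.2⟩
      · intro ω ω' hh _
        simp only [Prod.mk.injEq] at hh
        simp only [List.map_cons, List.cons.injEq]
        exact ⟨hh.1, hh.2⟩
    rw [e, List.map_cons, List.sum_cons]
    calc P.condH (fun ω => (V n ω, l.map (fun m => V m ω))) C
        ≤ P.condH (V n) C + P.condH (fun ω => l.map (fun m => V m ω)) C :=
          P.condH_pair_le _ _ C
      _ ≤ P.condH (V n) C + (l.map fun n => P.condH (V n) C).sum := by linarith
  
/-- Subadditivity over a finset of random variables. -/
lemma condH_finset_le [Nonempty Ω] {ι σ τ : Type} (V : ι → Ω → σ) (C : Ω → τ)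
    (s : Finset ι) :
    P.condH (fun ω => s.toList.map (fun n => V n ω)) C ≤ ∑ n ∈ s, P.condH (V n) C := by
  have := P.condH_list_le V C s.toList
  rwa [Finset.sum_map_toList] at this

end FinProb


/-- The uniform distribution on a finite nonempty set. -/
def uniformProb (Ω : Type) [Fintype Ω] [Nonempty Ω] : FinProb Ω where
  p _ := (Fintype.card Ω : ℝ)⁻¹
  nonneg _ := by positivity
  sum_one := by
    rw [Finset.sum_const, Finset.card_univ, nsmul_eq_mul,
      mul_inv_cancel₀ (by exact_mod_cast Fintype.card_ne_zero)]

/-- The sample space of a PIR code: a pair of (message realizations, random key).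
The `K` messages each consist of `L` symbols from the alphabet `X`. -/
abbrev PIRSamp (K L : ℕ) (X F : Type) : Type := (Fin K → Fin L → X) × F

/-- The underlying probability distribution of a PIR code: the `K` messages are
mutually independent, each uniform on `X^L`, and the random key is uniform on `F`
and independent of the messages; equivalently, `(W_{1:K}, F)` is uniform. -/
def pirP (K L : ℕ) (X F : Type) [Fintype X] [Nonempty X] [Fintype F] [Nonempty F] :
    FinProb (PIRSamp K L X F) := uniformProb _

/-- An `N`-database `K`-message private information retrieval code with message length `L`,
message alphabet `X`, answer alphabet `Y`, random-key set `F`, query sets `Q n` and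
storage sets `S n`.  The stored content of database `n` is `store n` applied to the messages;
the query to database `n` is `query n k F`; the answer is a string of `len n q` symbols of `Y`
(a deterministic function of the query and the stored content); `correct` states that the
desired message is a deterministic function of the answers and the random key, and `privacy`
states that the query distribution does not depend on the desired message index. -/
structure PIRCode (N K L : ℕ) (X Y F : Type) (Q S : Fin N → Type)
    [Fintype X] [Nonempty X] [Fintype Y] [Fintype F] [Nonempty F]
    [∀ n, Fintype (Q n)] [∀ n, Fintype (S n)] : Type where
  hN : 0 < N
  hK : 0 < K
  hL : 0 < L
  hX : 2 ≤ Fintype.card X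
  store : (n : Fin N) → (Fin K → Fin L → X) → S n
  query : (n : Fin N) → Fin K → F → Q n
  len : (n : Fin N) → Q n → ℕ
  answer : (n : Fin N) → (q : Q n) → S n → (Fin (len n q) → Y)
  correct : ∀ (k : Fin K) (ω ω' : PIRSamp K L X F), ω.2 = ω'.2 →
    (∀ n : Fin N, List.ofFn (answer n (query n k ω.2) (store n ω.1)) =
      List.ofFn (answer n (query n k ω'.2) (store n ω'.1))) →
    ω.1 k = ω'.1 k
  privacy : ∀ (n : Fin N) (k k' : Fin K) (q : Q n),
    (pirP K L X F).prob (fun ω => query n k ω.2 = q) =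
      (pirP K L X F).prob (fun ω => query n k' ω.2 = q)

namespace PIRCode

variable {N K L : ℕ} {X Y F : Type} {Q S : Fin N → Type}
  [Fintype X] [Nonempty X] [Fintype Y] [Fintype F] [Nonempty F]
  [∀ n, Fintype (Q n)] [∀ n, Fintype (S n)]

/-- Message `k` (0-indexed) as a random variable. -/
def Wrv (_c : PIRCode N K L X Y F Q S) (k : Fin K) : PIRSamp K L X F → (Fin L → X) :=
  fun ω => ω.1 k

/-- The random key as a random variable. -/
def Frv (_c : PIRCode N K L X Y F Q S) : PIRSamp K L X F → F := fun ω => ω.2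

/-- The stored content `S_n` as a random variable. -/
def Srv (c : PIRCode N K L X Y F Q S) (n : Fin N) : PIRSamp K L X F → S n :=
  fun ω => c.store n ω.1

/-- The query `Q_n^{[k]}` as a random variable. -/
def Qrv (c : PIRCode N K L X Y F Q S) (n : Fin N) (k : Fin K) : PIRSamp K L X F → Q n :=
  fun ω => c.query n k ω.2

/-- The answer string `A_n^{[k]}` of database `n` when retrieving message `k`. -/
def Arv (c : PIRCode N K L X Y F Q S) (n : Fin N) (k : Fin K) : PIRSamp K L X F → List Y :=
  fun ω => List.ofFn (c.answer n (c.query n k ω.2) (c.store n ω.1))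

/-- The answer string `A_n^{(q)}` of database `n` to the fixed query `q`. -/
def AnsFix (c : PIRCode N K L X Y F Q S) (n : Fin N) (q : Q n) : PIRSamp K L X F → List Y :=
  fun ω => List.ofFn (c.answer n q (c.store n ω.1))

/-- The operational storage cost `α_n = log₂|𝒮_n| / (L log₂|X|)` of database `n`. -/
def alphaN (_c : PIRCode N K L X Y F Q S) (n : Fin N) : ℝ :=
  Real.logb 2 (Fintype.card (S n)) / (L * Real.logb 2 (Fintype.card X))

/-- The average per-node storage cost `α`. -/
def alphaAvg (c : PIRCode N K L X Y F Q S) : ℝ := (∑ n, c.alphaN n) / N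

/-- The expected answer length `E[ℓ_n(Q_n^{[k]})]`. -/
def expLen (c : PIRCode N K L X Y F Q S) (n : Fin N) (k : Fin K) : ℝ :=
  ∑ ω : PIRSamp K L X F, (pirP K L X F).p ω * (c.len n (c.query n k ω.2))

/-- The operational download cost of database `n` for message index `k`:
`E[ℓ_n(Q_n^{[k]})]·log₂|Y| / (L log₂|X|)`. -/
def betaNK (c : PIRCode N K L X Y F Q S) (n : Fin N) (k : Fin K) : ℝ :=
  c.expLen n k * Real.logb 2 (Fintype.card Y) / (L * Real.logb 2 (Fintype.card X))

/-- The operational download cost `β_n` of database `n` (independent of the retrieved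
message index by privacy, hence evaluated at the first message). -/
def betaN (c : PIRCode N K L X Y F Q S) (n : Fin N) : ℝ := c.betaNK n ⟨0, c.hK⟩

/-- The average per-node download cost `β`. -/
def betaAvg (c : PIRCode N K L X Y F Q S) : ℝ := (∑ n, c.betaN n) / N

/-- The informational storage cost `α'_n = H(S_n) / (L log₂|X|)`. -/
def alphaInfoN (c : PIRCode N K L X Y F Q S) (n : Fin N) : ℝ :=
  (pirP K L X F).entH (c.Srv n) / (L * Real.logb 2 (Fintype.card X))

/-- The informational download cost `β'_n = H(A_n^{[k]} | F) / (L log₂|X|)`. -/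
def betaInfoNK (c : PIRCode N K L X Y F Q S) (n : Fin N) (k : Fin K) : ℝ :=
  (pirP K L X F).condH (c.Arv n k) c.Frv / (L * Real.logb 2 (Fintype.card X))

/-- The first `m` messages `W_{1:m}` as a single random variable (messages with
0-indexed position `≥ m` are blanked out by `none`). -/
def WleRv (_c : PIRCode N K L X Y F Q S) (m : ℕ) :
    PIRSamp K L X F → (Fin K → Option (Fin L → X)) :=
  fun ω i => if (i : ℕ) < m then some (ω.1 i) else none

/-- All answers `A_{1:N}^{[k]}` as a single random variable. -/
def AallRv (c : PIRCode N K L X Y F Q S) (k : Fin K) : PIRSamp K L X F → (Fin N → List Y) :=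
  fun ω n => c.Arv n k ω

/-- The answers `A_{1:n-1,n+1:N}^{[k]}` of all databases except database `n`. -/
def AexcRv (c : PIRCode N K L X Y F Q S) (n : Fin N) (k : Fin K) :
    PIRSamp K L X F → (Fin N → Option (List Y)) :=
  fun ω n' => if n' = n then none else some (c.Arv n' k ω)

/-- The stored contents `S_{1:n-1,n+1:N}` of all databases except database `n`. -/
def SexcRv (c : PIRCode N K L X Y F Q S) (n : Fin N) :
    PIRSamp K L X F → ((n' : Fin N) → Option (S n')) :=
  fun ω n' => if n' = n then none else some (c.store n' ω.1)

/-- `T^k = H(A_{1:N}^{[k]} | W_{1:k}, F)`; here `k : Fin K` is the 0-indexed message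
index, corresponding to the paper's message index `k+1`. -/
def T (c : PIRCode N K L X Y F Q S) (k : Fin K) : ℝ :=
  (pirP K L X F).condH (c.AallRv k) (fun ω => (c.WleRv ((k : ℕ) + 1) ω, ω.2))

/-- `V_n^k = H(A_{1:n-1,n+1:N}^{[k]}, S_n | W_{1:k}, F)` (0-indexed `k`, as in `T`). -/
def Vnk (c : PIRCode N K L X Y F Q S) (n : Fin N) (k : Fin K) : ℝ :=
  (pirP K L X F).condH (fun ω => (c.AexcRv n k ω, c.Srv n ω))
    (fun ω => (c.WleRv ((k : ℕ) + 1) ω, ω.2))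

/-- `V^k = (1/N) Σ_n V_n^k`. -/
def Vavg (c : PIRCode N K L X Y F Q S) (k : Fin K) : ℝ := (∑ n, c.Vnk n k) / N

end PIRCode

section Uniform

variable {Ω : Type} [Fintype Ω] [Nonempty Ω]

lemma uniform_prob (E : Ω → Prop) :
    (uniformProb Ω).prob E
      = (Finset.univ.filter E).card * (Fintype.card Ω : ℝ)⁻¹ := by
  rw [FinProb.prob_eq_sum_filter]
  simp [uniformProb, Finset.sum_const]

lemma entH_uniform {σ : Type} (Z : Ω → σ) (d : ℕ)
    (hd : ∀ ω, (Finset.univ.filter fun ω' => Z ω' = Z ω).card = d) :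
    (uniformProb Ω).entH Z
      = Real.logb 2 (Fintype.card Ω) - Real.logb 2 d := by
  classical
  obtain ⟨ω₀⟩ := ‹Nonempty Ω›
  have hd0 : 0 < d := by
    rw [← hd ω₀]
    exact Finset.card_pos.2 ⟨ω₀, by simp⟩
  have hc0 : 0 < Fintype.card Ω := Fintype.card_pos
  rw [FinProb.entH_eq_sum]
  have hpr : ∀ ω : Ω, ((uniformProb Ω).prob fun ω' => Z ω' = Z ω)
      = d * (Fintype.card Ω : ℝ)⁻¹ := by
    intro ω; rw [uniform_prob, hd ω]
  have hterm : ∀ ω : Ω,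
      -((uniformProb Ω).p ω * Real.logb 2 ((uniformProb Ω).prob fun ω' => Z ω' = Z ω))
      = (Fintype.card Ω : ℝ)⁻¹ * (Real.logb 2 (Fintype.card Ω) - Real.logb 2 d) := by
    intro ω
    rw [hpr ω]
    show -((Fintype.card Ω : ℝ)⁻¹ * _) = _
    rw [Real.logb_mul (by positivity) (by positivity), Real.logb_inv]
    ring
  rw [Finset.sum_congr rfl fun ω _ => hterm ω, Finset.sum_const, Finset.card_univ,
    nsmul_eq_mul, ← mul_assoc, mul_inv_cancel₀ (by positivity), one_mul]

end Uniform

namespace PIRCode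

variable {N K L : ℕ} {X Y F : Type} {Q S : Fin N → Type}
  [Fintype X] [Nonempty X] [Fintype Y] [Fintype F] [Nonempty F]
  [∀ n, Fintype (Q n)] [∀ n, Fintype (S n)]

lemma card_fin_lt (m : ℕ) (hm : m ≤ K) :
    Fintype.card {i : Fin K // (i : ℕ) < m} = m := by
  have e : Fintype.card {i : Fin K // (i : ℕ) < m} = Fintype.card (Fin m) :=
    Fintype.card_congr
    { toFun := fun x => ⟨(x.1 : ℕ), x.2⟩
      invFun := fun y => ⟨⟨(y : ℕ), lt_of_lt_of_le y.2 hm⟩, y.2⟩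
      left_inv := fun x => by ext; rfl
      right_inv := fun y => by ext; rfl }
  rw [e, Fintype.card_fin]

lemma card_fiber_wle (c : PIRCode N K L X Y F Q S) (m : ℕ) (hm : m ≤ K)
    (ω : PIRSamp K L X F) :
    (Finset.univ.filter fun ω' : PIRSamp K L X F =>
        (c.WleRv m ω', ω'.2) = (c.WleRv m ω, ω.2)).card
      = (Fintype.card X ^ L) ^ (K - m) := by
  classical
  have key : (Finset.univ.filter fun ω' : PIRSamp K L X F =>
        (c.WleRv m ω', ω'.2) = (c.WleRv m ω, ω.2)).card
      = (Finset.univ : Finset ({i : Fin K // ¬ (i : ℕ) < m} → (Fin L → X))).card := by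
    apply Finset.card_bij'
      (i := fun ω' _ => fun i : {i : Fin K // ¬ (i : ℕ) < m} => ω'.1 i.1)
      (j := fun g _ =>
        ((fun i : Fin K => if h : (i : ℕ) < m then ω.1 i else g ⟨i, h⟩), ω.2))
    · intro ω' hω'
      exact Finset.mem_univ _
    · intro g _
      simp only [Finset.mem_filter, Finset.mem_univ, true_and, Prod.mk.injEq]
      refine ⟨?_, trivial⟩
      funext i
      simp only [WleRv]
      by_cases h : (i : ℕ) < m
      · rw [if_pos h, if_pos h, dif_pos h]
      · rw [if_neg h, if_neg h]
    · intro ω' hω'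
      simp only [Finset.mem_filter, Finset.mem_univ, true_and, Prod.mk.injEq] at hω'
      obtain ⟨hw, hf⟩ := hω'
      have hw' : ∀ i : Fin K, (i : ℕ) < m → ω'.1 i = ω.1 i := by
        intro i hi
        have := congrFun hw i
        simp only [WleRv, if_pos hi, Option.some.injEq] at this
        exact this
      rw [Prod.ext_iff]
      constructor
      · funext i
        dsimp only
        by_cases h : (i : ℕ) < m
        · rw [dif_pos h]
          exact (hw' i h).symm
        · rw [dif_neg h]
      · exact hf.symm
    · intro g _
      funext i
      dsimp only
      rw [dif_neg i.2]
  rw [key, Finset.card_univ, Fintype.card_fun, Fintype.card_fun, Fintype.card_fin,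
    Fintype.card_subtype_compl, card_fin_lt m hm, Fintype.card_fin]

lemma card_pirsamp :
    Fintype.card (PIRSamp K L X F) = (Fintype.card X ^ L) ^ K * Fintype.card F := by
  classical
  rw [Fintype.card_prod, Fintype.card_fun, Fintype.card_fun, Fintype.card_fin,
    Fintype.card_fin]

lemma entH_wle (c : PIRCode N K L X Y F Q S) (m : ℕ) (hm : m ≤ K) :
    (pirP K L X F).entH (fun ω => (c.WleRv m ω, ω.2))
      = Real.logb 2 (Fintype.card (PIRSamp K L X F))
        - Real.logb 2 ((Fintype.card X ^ L) ^ (K - m) : ℕ) := by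
  refine entH_uniform _ _ fun ω => ?_
  have h := c.card_fiber_wle m hm ω
  convert h using 2
  congr!

/-- `H(W_{k+1} | W_{1:k}, F) = L log₂ |X|`. -/
lemma condH_wnext (c : PIRCode N K L X Y F Q S) (k : ℕ) (hk1 : k + 1 < K) :
    (pirP K L X F).condH (fun ω => ω.1 ⟨k + 1, hk1⟩)
        (fun ω => (c.WleRv (k + 1) ω, ω.2))
      = L * Real.logb 2 (Fintype.card X) := by
  classical
  have hX1 : (1:ℕ) ≤ Fintype.card X := Fintype.card_pos
  have e1 : (pirP K L X F).entH
      (fun ω => (ω.1 ⟨k + 1, hk1⟩, (c.WleRv (k + 1) ω, ω.2)))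
      = (pirP K L X F).entH (fun ω => (c.WleRv (k + 2) ω, ω.2)) := by
    apply (pirP K L X F).entH_eq_of_determines
    · intro ω ω' hh
      have hh' : (ω.1 ⟨k + 1, hk1⟩, (c.WleRv (k + 1) ω, ω.2))
          = (ω'.1 ⟨k + 1, hk1⟩, (c.WleRv (k + 1) ω', ω'.2)) := hh
      obtain ⟨h1, hrest⟩ := Prod.mk.inj hh'
      obtain ⟨h2, h3⟩ := Prod.mk.inj hrest
      rw [Prod.ext_iff]
      refine ⟨?_, h3⟩
      funext i
      simp only [WleRv]
      by_cases hi : (i : ℕ) < k + 2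
      · rw [if_pos hi, if_pos hi]
        by_cases hi' : (i : ℕ) < k + 1
        · have := congrFun h2 i
          simp only [WleRv, if_pos hi'] at this
          exact this
        · have hieq : i = ⟨k + 1, hk1⟩ := by
            apply Fin.ext
            show (i : ℕ) = k + 1
            omega
          rw [hieq, h1]
      · rw [if_neg hi, if_neg hi]
    · intro ω ω' hh
      have hh' : (c.WleRv (k + 2) ω, ω.2) = (c.WleRv (k + 2) ω', ω'.2) := hh
      obtain ⟨h2, h3⟩ := Prod.mk.inj hh' 
      rw [Prod.ext_iff, Prod.ext_iff]
      refine ⟨?_, ?_, h3⟩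
      · have := congrFun h2 ⟨k + 1, hk1⟩
        simp only [WleRv,
          if_pos (Nat.lt_succ_self (k + 1) : ((⟨k + 1, hk1⟩ : Fin K) : ℕ) < k + 2),
          Option.some.injEq] at this
        exact this
      · funext i
        simp only [WleRv]
        by_cases hi' : (i : ℕ) < k + 1
        · rw [if_pos hi', if_pos hi']
          have := congrFun h2 i
          simp only [WleRv, if_pos (by omega : (i : ℕ) < k + 2), Option.some.injEq] at this
          rw [this]
        · rw [if_neg hi', if_neg hi']
  rw [FinProb.condH, e1, c.entH_wle (k + 2) (by omega), c.entH_wle (k + 1) (by omega)]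
  have hA : (0:ℝ) < (Fintype.card X : ℝ) ^ L := by positivity
  have hj : K - (k + 1) = (K - (k + 2)) + 1 := by omega
  push_cast
  rw [hj, pow_succ, Real.logb_mul (by positivity) (by positivity), Real.logb_pow, Real.logb_pow]
  ring

end PIRCode

section EntEquiv

variable {Ω : Type} [Fintype Ω] [Nonempty Ω]

lemma entH_equiv {σ : Type} (Z : Ω → σ) (Ψ : Ω ≃ Ω) :
    (uniformProb Ω).entH (fun ω => Z (Ψ ω)) = (uniformProb Ω).entH Z := by
  classical
  rw [FinProb.entH_eq_sum, FinProb.entH_eq_sum]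
  have hpr : ∀ v : σ, ((uniformProb Ω).prob fun ω' => Z (Ψ ω') = v)
      = (uniformProb Ω).prob fun ω' => Z ω' = v := by
    intro v
    rw [uniform_prob, uniform_prob]
    congr 2
    apply Finset.card_nbij' (i := fun ω => Ψ ω) (j := fun ω => Ψ.symm ω)
    · intro a ha
      simp only [Finset.mem_coe, Finset.mem_filter, Finset.mem_univ, true_and] at ha ⊢
      exact ha
    · intro a ha
      simp only [Finset.mem_coe, Finset.mem_filter, Finset.mem_univ, true_and] at ha ⊢
      rwa [Equiv.apply_symm_apply]
    · intro a _; exact Equiv.symm_apply_apply _ _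
    · intro a _; exact Equiv.apply_symm_apply _ _
  calc ∑ ω, -((uniformProb Ω).p ω
        * Real.logb 2 ((uniformProb Ω).prob fun ω' => Z (Ψ ω') = Z (Ψ ω)))
      = ∑ ω, -((uniformProb Ω).p (Ψ ω)
        * Real.logb 2 ((uniformProb Ω).prob fun ω' => Z ω' = Z (Ψ ω))) := by
        refine Finset.sum_congr rfl fun ω _ => ?_
        rw [hpr (Z (Ψ ω))]
        rfl
    _ = ∑ ω, -((uniformProb Ω).p ω
        * Real.logb 2 ((uniformProb Ω).prob fun ω' => Z ω' = Z ω)) :=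
        Equiv.sum_comp Ψ fun ω =>
          -((uniformProb Ω).p ω * Real.logb 2 ((uniformProb Ω).prob fun ω' => Z ω' = Z ω))

end EntEquiv

namespace PIRCode

variable {N K L : ℕ} {X Y F : Type} {Q S : Fin N → Type}
  [Fintype X] [Nonempty X] [Fintype Y] [Fintype F] [Nonempty F]
  [∀ n, Fintype (Q n)] [∀ n, Fintype (S n)]

lemma query_fiber_card_eq (c : PIRCode N K L X Y F Q S) (n : Fin N) (k k' : Fin K)
    (q : Q n) :
    (Finset.univ.filter fun f : F => c.query n k f = q).card
      = (Finset.univ.filter fun f : F => c.query n k' f = q).card := by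
  classical
  have hp := c.privacy n k k' q
  have hcard : ∀ kk : Fin K,
      (Finset.univ.filter fun ω : PIRSamp K L X F => c.query n kk ω.2 = q).card
        = Fintype.card (Fin K → Fin L → X)
          * (Finset.univ.filter fun f : F => c.query n kk f = q).card := by
    intro kk
    rw [← Finset.univ_product_univ,
      Finset.filter_product_right (fun f : F => c.query n kk f = q),
      Finset.card_product, Finset.card_univ]
  replace hp : ((uniformProb (PIRSamp K L X F)).prob fun ω => c.query n k ω.2 = q)
      = (uniformProb (PIRSamp K L X F)).prob fun ω => c.query n k' ω.2 = q := hp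
  rw [uniform_prob, uniform_prob] at hp
  have hcΩ : (0:ℝ) < (Fintype.card (PIRSamp K L X F) : ℝ) := by
    exact_mod_cast Fintype.card_pos
  have hreal : ((Finset.univ.filter fun ω : PIRSamp K L X F =>
      c.query n k ω.2 = q).card : ℝ)
      = (Finset.univ.filter fun ω : PIRSamp K L X F => c.query n k' ω.2 = q).card :=
    mul_right_cancel₀ (inv_ne_zero (ne_of_gt hcΩ)) hp
  have hnat : (Finset.univ.filter fun ω : PIRSamp K L X F => c.query n k ω.2 = q).card
      = (Finset.univ.filter fun ω : PIRSamp K L X F => c.query n k' ω.2 = q).card := by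
    exact_mod_cast hreal
  rw [hcard k, hcard k'] at hnat
  exact Nat.eq_of_mul_eq_mul_left Fintype.card_pos hnat

/-- Privacy yields a bijection of the key space intertwining the two queries. -/
lemma exists_sigma (c : PIRCode N K L X Y F Q S) (n : Fin N) (k k' : Fin K) :
    ∃ σF : F ≃ F, ∀ f, c.query n k (σF f) = c.query n k' f := by
  classical
  have hcards : ∀ q : Q n, Fintype.card {f : F // c.query n k' f = q}
      = Fintype.card {f : F // c.query n k f = q} := by
    intro q
    rw [Fintype.card_subtype, Fintype.card_subtype]
    exact (c.query_fiber_card_eq n k k' q).symm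
  have e : ∀ q : Q n, {f : F // c.query n k' f = q} ≃ {f : F // c.query n k f = q} :=
    fun q => Fintype.equivOfCardEq (hcards q)
  refine ⟨((Equiv.sigmaFiberEquiv (c.query n k')).symm.trans
    ((Equiv.sigmaCongrRight e).trans (Equiv.sigmaFiberEquiv (c.query n k)))), ?_⟩
  intro f
  simp only [Equiv.trans_apply, Equiv.sigmaFiberEquiv, Equiv.sigmaCongrRight,
    Equiv.coe_fn_symm_mk, Equiv.coe_fn_mk]
  exact (e (c.query n k' f) ⟨f, rfl⟩).2

/-- The privacy swap: conditioned on any message-measurable variable and the key,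
the answers for two message indices have the same conditional entropy. -/
lemma condH_swap (c : PIRCode N K L X Y F Q S) (n : Fin N) (k k' : Fin K)
    {τ : Type} (u : (Fin K → Fin L → X) → τ) :
    (pirP K L X F).condH (c.Arv n k') (fun ω => (u ω.1, ω.2))
      = (pirP K L X F).condH (c.Arv n k) (fun ω => (u ω.1, ω.2)) := by
  classical
  obtain ⟨σF, hσ⟩ := c.exists_sigma n k k'
  set Ψ : PIRSamp K L X F ≃ PIRSamp K L X F := (Equiv.refl _).prodCongr σF with hΨ
  have hA : ∀ ω, c.Arv n k' ω = c.Arv n k (Ψ ω) := by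
    intro ω
    show List.ofFn (c.answer n (c.query n k' ω.2) (c.store n ω.1))
      = List.ofFn (c.answer n (c.query n k (σF ω.2)) (c.store n ω.1))
    rw [hσ ω.2]
  have e2 : (pirP K L X F).entH (fun ω => (c.Arv n k' ω, (u ω.1, ω.2)))
      = (pirP K L X F).entH (fun ω => (c.Arv n k ω, (u ω.1, ω.2))) := by
    have step1 : (pirP K L X F).entH (fun ω => (c.Arv n k' ω, (u ω.1, ω.2)))
        = (pirP K L X F).entH (fun ω => (c.Arv n k (Ψ ω), (u ω.1, ω.2))) := by
      congr 1
      funext ω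
      rw [hA ω]
    have step2 : (pirP K L X F).entH (fun ω => (c.Arv n k (Ψ ω), (u ω.1, ω.2)))
        = (pirP K L X F).entH (fun ω => (c.Arv n k (Ψ ω), (u (Ψ ω).1, (Ψ ω).2))) := by
      apply (pirP K L X F).entH_eq_of_determines
      · intro ω ω' hh
        have hh' : (c.Arv n k (Ψ ω), (u ω.1, ω.2))
            = (c.Arv n k (Ψ ω'), (u ω'.1, ω'.2)) := hh
        obtain ⟨h1, hrest⟩ := Prod.mk.inj hh'
        obtain ⟨h2, h3⟩ := Prod.mk.inj hrest
        show (c.Arv n k (Ψ ω), (u (Ψ ω).1, (Ψ ω).2))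
            = (c.Arv n k (Ψ ω'), (u (Ψ ω').1, (Ψ ω').2))
        rw [Prod.ext_iff, Prod.ext_iff]
        refine ⟨h1, h2, ?_⟩
        show σF ω.2 = σF ω'.2
        rw [h3]
      · intro ω ω' hh
        have hh' : (c.Arv n k (Ψ ω), (u (Ψ ω).1, (Ψ ω).2))
            = (c.Arv n k (Ψ ω'), (u (Ψ ω').1, (Ψ ω').2)) := hh
        obtain ⟨h1, hrest⟩ := Prod.mk.inj hh'
        obtain ⟨h2, h3⟩ := Prod.mk.inj hrest
        show (c.Arv n k (Ψ ω), (u ω.1, ω.2)) = (c.Arv n k (Ψ ω'), (u ω'.1, ω'.2))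
        have h3' : σF ω.2 = σF ω'.2 := h3
        rw [Prod.ext_iff, Prod.ext_iff]
        exact ⟨h1, h2, σF.injective h3'⟩
    have step3 : (pirP K L X F).entH (fun ω => (c.Arv n k (Ψ ω), (u (Ψ ω).1, (Ψ ω).2)))
        = (pirP K L X F).entH (fun ω => (c.Arv n k ω, (u ω.1, ω.2))) :=
      entH_equiv (fun ω => (c.Arv n k ω, (u ω.1, ω.2))) Ψ
    rw [step1, step2, step3]
  unfold FinProb.condH
  rw [e2]

end PIRCode

namespace PIRCode

variable {N K L : ℕ} {X Y F : Type} {Q S : Fin N → Type}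
  [Fintype X] [Nonempty X] [Fintype Y] [Fintype F] [Nonempty F]
  [∀ n, Fintype (Q n)] [∀ n, Fintype (S n)]

lemma wle_det1 (c : PIRCode N K L X Y F Q S) (k : ℕ) (hk1 : k + 1 < K) :
    ∀ ω ω' : PIRSamp K L X F,
    (ω.1 ⟨k + 1, hk1⟩, (c.WleRv (k + 1) ω, ω.2))
      = (ω'.1 ⟨k + 1, hk1⟩, (c.WleRv (k + 1) ω', ω'.2)) →
    (c.WleRv (k + 2) ω, ω.2) = (c.WleRv (k + 2) ω', ω'.2) := by
  intro ω ω' hh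
  obtain ⟨h1, hrest⟩ := Prod.mk.inj hh
  obtain ⟨h2, h3⟩ := Prod.mk.inj hrest
  rw [Prod.ext_iff]
  refine ⟨?_, h3⟩
  funext i
  simp only [WleRv]
  by_cases hi : (i : ℕ) < k + 2
  · rw [if_pos hi, if_pos hi]
    by_cases hi' : (i : ℕ) < k + 1
    · have := congrFun h2 i
      simp only [WleRv, if_pos hi'] at this
      exact this
    · have hieq : i = ⟨k + 1, hk1⟩ := by
        apply Fin.ext
        show (i : ℕ) = k + 1
        omega
      rw [hieq, h1]
  · rw [if_neg hi, if_neg hi]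

lemma wle_det2 (c : PIRCode N K L X Y F Q S) (k : ℕ) (hk1 : k + 1 < K) :
    ∀ ω ω' : PIRSamp K L X F,
    (c.WleRv (k + 2) ω, ω.2) = (c.WleRv (k + 2) ω', ω'.2) →
    (ω.1 ⟨k + 1, hk1⟩, (c.WleRv (k + 1) ω, ω.2))
      = (ω'.1 ⟨k + 1, hk1⟩, (c.WleRv (k + 1) ω', ω'.2)) := by
  intro ω ω' hh
  obtain ⟨h2, h3⟩ := Prod.mk.inj hh
  rw [Prod.ext_iff, Prod.ext_iff]
  refine ⟨?_, ?_, h3⟩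
  · have := congrFun h2 ⟨k + 1, hk1⟩
    simp only [WleRv,
      if_pos (Nat.lt_succ_self (k + 1) : ((⟨k + 1, hk1⟩ : Fin K) : ℕ) < k + 2),
      Option.some.injEq] at this
    exact this
  · funext i
    simp only [WleRv]
    by_cases hi' : (i : ℕ) < k + 1
    · rw [if_pos hi', if_pos hi']
      have := congrFun h2 i
      simp only [WleRv, if_pos (by omega : (i : ℕ) < k + 2), Option.some.injEq] at this
      rw [this]
    · rw [if_neg hi', if_neg hi']

/-- Σₙ H(Aₙ^{[k+1]} | W_{1:k}, F) ≥ L' + T^{k+1}. -/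
lemma sum_singles_ge (c : PIRCode N K L X Y F Q S) (k : Fin K) (hk : (k : ℕ) + 1 < K) :
    (L : ℝ) * Real.logb 2 (Fintype.card X) + c.T ⟨(k : ℕ) + 1, hk⟩
      ≤ ∑ n : Fin N, (pirP K L X F).condH (c.Arv n ⟨(k : ℕ) + 1, hk⟩)
          (fun ω => (c.WleRv ((k : ℕ) + 1) ω, ω.2)) := by
  classical
  have hlist := (pirP K L X F).condH_finset_le (fun n => c.Arv n ⟨(k : ℕ) + 1, hk⟩)
    (fun ω => (c.WleRv ((k : ℕ) + 1) ω, ω.2)) Finset.univ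
  have heq : (pirP K L X F).condH (c.AallRv ⟨(k : ℕ) + 1, hk⟩)
      (fun ω => (c.WleRv ((k : ℕ) + 1) ω, ω.2))
      = (pirP K L X F).condH
        (fun ω => Finset.univ.toList.map (fun n => c.Arv n ⟨(k : ℕ) + 1, hk⟩ ω))
        (fun ω => (c.WleRv ((k : ℕ) + 1) ω, ω.2)) := by
    apply (pirP K L X F).condH_eq_of_determines
    · intro ω ω' h _
      exact congrArg (fun g => List.map g Finset.univ.toList) h
    · intro ω ω' h _
      funext n
      exact List.map_inj_left.1 h n (Finset.mem_toList.2 (Finset.mem_univ n))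
  have hdec : ∀ ω ω' : PIRSamp K L X F,
      c.AallRv ⟨(k : ℕ) + 1, hk⟩ ω = c.AallRv ⟨(k : ℕ) + 1, hk⟩ ω' →
      (c.WleRv ((k : ℕ) + 1) ω, ω.2) = (c.WleRv ((k : ℕ) + 1) ω', ω'.2) →
      ω.1 ⟨(k : ℕ) + 1, hk⟩ = ω'.1 ⟨(k : ℕ) + 1, hk⟩ := by
    intro ω ω' hA hC
    obtain ⟨_, hf⟩ := Prod.mk.inj hC
    exact c.correct ⟨(k : ℕ) + 1, hk⟩ ω ω' hf (fun n => congrFun hA n)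
  have e1 : (pirP K L X F).condH (c.AallRv ⟨(k : ℕ) + 1, hk⟩)
      (fun ω => (c.WleRv ((k : ℕ) + 1) ω, ω.2))
      = (pirP K L X F).condH
        (fun ω => (c.AallRv ⟨(k : ℕ) + 1, hk⟩ ω, ω.1 ⟨(k : ℕ) + 1, hk⟩))
        (fun ω => (c.WleRv ((k : ℕ) + 1) ω, ω.2)) := by
    apply (pirP K L X F).condH_eq_of_determines
    · intro ω ω' h hC
      rw [Prod.ext_iff]
      exact ⟨h, hdec ω ω' h hC⟩
    · intro ω ω' h _
      exact (Prod.mk.inj h).1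
  have e2 := (pirP K L X F).condH_chain (c.AallRv ⟨(k : ℕ) + 1, hk⟩)
      (fun ω => ω.1 ⟨(k : ℕ) + 1, hk⟩) (fun ω => (c.WleRv ((k : ℕ) + 1) ω, ω.2))
  have e3 : (pirP K L X F).condH (fun ω => ω.1 ⟨(k : ℕ) + 1, hk⟩)
      (fun ω => (c.WleRv ((k : ℕ) + 1) ω, ω.2))
      = (L : ℝ) * Real.logb 2 (Fintype.card X) := c.condH_wnext (k : ℕ) hk
  have e4 : (pirP K L X F).condH (c.AallRv ⟨(k : ℕ) + 1, hk⟩)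
      (fun ω => (ω.1 ⟨(k : ℕ) + 1, hk⟩, (c.WleRv ((k : ℕ) + 1) ω, ω.2)))
      = (pirP K L X F).condH (c.AallRv ⟨(k : ℕ) + 1, hk⟩)
        (fun ω => (c.WleRv ((k : ℕ) + 2) ω, ω.2)) :=
    (pirP K L X F).condH_congr_cond _ (c.wle_det1 (k : ℕ) hk) (c.wle_det2 (k : ℕ) hk)
  have e5 : c.T ⟨(k : ℕ) + 1, hk⟩
      = (pirP K L X F).condH (c.AallRv ⟨(k : ℕ) + 1, hk⟩)
        (fun ω => (c.WleRv ((k : ℕ) + 2) ω, ω.2)) := rfl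
  rw [heq] at e1
  linarith [hlist, e1, e2, e3, e4, e5.symm.le]

/-- H(Aₙ^{[k]} | W, F) ≤ T. -/
lemma single_le_T (c : PIRCode N K L X Y F Q S) (k : Fin K) (n : Fin N) :
    (pirP K L X F).condH (c.Arv n k) (fun ω => (c.WleRv ((k : ℕ) + 1) ω, ω.2))
      ≤ c.T k :=
  (pirP K L X F).condH_le_of_determines (Z₁ := c.AallRv k) _
    (fun ω ω' h _ => congrFun h n)

/-- The privacy swap at the `T`-conditioning. -/
lemma swapC (c : PIRCode N K L X Y F Q S) (k k' : Fin K) (m : ℕ) (n : Fin N) :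
    (pirP K L X F).condH (c.Arv n k') (fun ω => (c.WleRv m ω, ω.2))
      = (pirP K L X F).condH (c.Arv n k) (fun ω => (c.WleRv m ω, ω.2)) :=
  c.condH_swap n k k'
    (fun w => (fun i : Fin K => if (i : ℕ) < m then some (w i) else none))

/-- T-recursion: L' + T^{k+1} ≤ N T^k. -/
lemma T_rec (c : PIRCode N K L X Y F Q S) (k : Fin K) (hk : (k : ℕ) + 1 < K) :
    (L : ℝ) * Real.logb 2 (Fintype.card X) + c.T ⟨(k : ℕ) + 1, hk⟩
      ≤ (N : ℝ) * c.T k := by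
  classical
  have h1 := c.sum_singles_ge k hk
  have h2 : ∑ n : Fin N, (pirP K L X F).condH (c.Arv n ⟨(k : ℕ) + 1, hk⟩)
      (fun ω => (c.WleRv ((k : ℕ) + 1) ω, ω.2))
      = ∑ n : Fin N, (pirP K L X F).condH (c.Arv n k)
        (fun ω => (c.WleRv ((k : ℕ) + 1) ω, ω.2)) :=
    Finset.sum_congr rfl fun n _ => c.swapC k ⟨(k : ℕ) + 1, hk⟩ ((k : ℕ) + 1) n
  have h3 : (∑ n : Fin N, (pirP K L X F).condH (c.Arv n k)
      (fun ω => (c.WleRv ((k : ℕ) + 1) ω, ω.2))) ≤ (N : ℝ) * c.T k := by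
    have hb : (∑ n : Fin N, (pirP K L X F).condH (c.Arv n k)
        (fun ω => (c.WleRv ((k : ℕ) + 1) ω, ω.2))) ≤ ∑ _n : Fin N, c.T k :=
      Finset.sum_le_sum fun n _ => c.single_le_T k n
    have hc : (∑ _n : Fin N, c.T k) = (N : ℝ) * c.T k := by
      rw [Finset.sum_const, Finset.card_univ, Fintype.card_fin, nsmul_eq_mul]
    linarith
  exact le_trans h1 (le_trans (le_of_eq h2) h3)

end PIRCode

namespace PIRCode

variable {N K L : ℕ} {X Y F : Type} {Q S : Fin N → Type}
  [Fintype X] [Nonempty X] [Fintype Y] [Fintype F] [Nonempty F]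
  [∀ n, Fintype (Q n)] [∀ n, Fintype (S n)]

/-- Per-database estimate in the V-recursion. -/
lemma per_n (c : PIRCode N K L X Y F Q S) (hN : 3 ≤ N) (k : Fin K)
    (hk : (k : ℕ) + 1 < K) (n : Fin N) :
    c.Vnk n ⟨(k : ℕ) + 1, hk⟩ + (L : ℝ) * Real.logb 2 (Fintype.card X)
      ≤ c.Vnk n k + ((N : ℝ) - 2) * (c.T k
          - (pirP K L X F).condH (c.Arv n ⟨(k : ℕ) + 1, hk⟩)
              (fun ω => (c.WleRv ((k : ℕ) + 1) ω, ω.2))) := by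
  classical
  have hN0 : 0 < N := by omega
  have hN1 : 1 < N := by omega
  obtain ⟨ν, hνn⟩ : ∃ ν : Fin N, ν ≠ n := by
    by_cases h0 : n = ⟨0, hN0⟩
    · refine ⟨⟨1, hN1⟩, ?_⟩
      rw [h0]
      intro hc
      exact absurd (congrArg Fin.val hc) (by simp)
    · exact ⟨⟨0, hN0⟩, fun hc => h0 hc.symm⟩
  -- (1) decode identity: H(A_{¬n}^{[k+1]}, S_n | W_{1:k}, F) = L' + V_n^{k+1}
  have hdec1 : ∀ ω ω' : PIRSamp K L X F,
      (c.AexcRv n ⟨(k : ℕ) + 1, hk⟩ ω, c.Srv n ω)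
        = (c.AexcRv n ⟨(k : ℕ) + 1, hk⟩ ω', c.Srv n ω') →
      (c.WleRv ((k : ℕ) + 1) ω, ω.2) = (c.WleRv ((k : ℕ) + 1) ω', ω'.2) →
      ω.1 ⟨(k : ℕ) + 1, hk⟩ = ω'.1 ⟨(k : ℕ) + 1, hk⟩ := by
    intro ω ω' hpair hC
    obtain ⟨hexc, hS⟩ := Prod.mk.inj hpair
    obtain ⟨_, hf⟩ := Prod.mk.inj hC
    apply c.correct ⟨(k : ℕ) + 1, hk⟩ ω ω' hf
    intro n''
    by_cases hn'' : n'' = n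
    · subst hn''
      show List.ofFn (c.answer n'' (c.query n'' _ ω.2) (c.store n'' ω.1)) = _
      rw [hf, show c.store n'' ω.1 = c.store n'' ω'.1 from hS]
    · have := congrFun hexc n''
      simp only [AexcRv, if_neg hn'', Option.some.injEq] at this
      exact this
  have hid1 : (pirP K L X F).condH
      (fun ω => (c.AexcRv n ⟨(k : ℕ) + 1, hk⟩ ω, c.Srv n ω))
      (fun ω => (c.WleRv ((k : ℕ) + 1) ω, ω.2))
      = (L : ℝ) * Real.logb 2 (Fintype.card X) + c.Vnk n ⟨(k : ℕ) + 1, hk⟩ := by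
    have e1 : (pirP K L X F).condH
        (fun ω => (c.AexcRv n ⟨(k : ℕ) + 1, hk⟩ ω, c.Srv n ω))
        (fun ω => (c.WleRv ((k : ℕ) + 1) ω, ω.2))
        = (pirP K L X F).condH
          (fun ω => ((c.AexcRv n ⟨(k : ℕ) + 1, hk⟩ ω, c.Srv n ω), ω.1 ⟨(k : ℕ) + 1, hk⟩))
          (fun ω => (c.WleRv ((k : ℕ) + 1) ω, ω.2)) := by
      apply (pirP K L X F).condH_eq_of_determines
      · intro ω ω' h hC
        rw [Prod.ext_iff]
        exact ⟨h, hdec1 ω ω' h hC⟩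
      · intro ω ω' h _
        exact (Prod.mk.inj h).1
    have e2 := (pirP K L X F).condH_chain
      (fun ω => (c.AexcRv n ⟨(k : ℕ) + 1, hk⟩ ω, c.Srv n ω))
      (fun ω => ω.1 ⟨(k : ℕ) + 1, hk⟩)
      (fun ω => (c.WleRv ((k : ℕ) + 1) ω, ω.2))
    have e3 : (pirP K L X F).condH (fun ω => ω.1 ⟨(k : ℕ) + 1, hk⟩)
        (fun ω => (c.WleRv ((k : ℕ) + 1) ω, ω.2))
        = (L : ℝ) * Real.logb 2 (Fintype.card X) := c.condH_wnext (k : ℕ) hk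
    have e4 : (pirP K L X F).condH
        (fun ω => (c.AexcRv n ⟨(k : ℕ) + 1, hk⟩ ω, c.Srv n ω))
        (fun ω => (ω.1 ⟨(k : ℕ) + 1, hk⟩, (c.WleRv ((k : ℕ) + 1) ω, ω.2)))
        = (pirP K L X F).condH
          (fun ω => (c.AexcRv n ⟨(k : ℕ) + 1, hk⟩ ω, c.Srv n ω))
          (fun ω => (c.WleRv ((k : ℕ) + 2) ω, ω.2)) :=
      (pirP K L X F).condH_congr_cond _ (c.wle_det1 (k : ℕ) hk) (c.wle_det2 (k : ℕ) hk)
    have e5 : c.Vnk n ⟨(k : ℕ) + 1, hk⟩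
        = (pirP K L X F).condH
          (fun ω => (c.AexcRv n ⟨(k : ℕ) + 1, hk⟩ ω, c.Srv n ω))
          (fun ω => (c.WleRv ((k : ℕ) + 2) ω, ω.2)) := rfl
    rw [e1, e2, e3, e4, ← e5]
    ring
  -- (2) chain rules
  have hchain : ∀ k' : Fin K, (pirP K L X F).condH
      (fun ω => (c.AexcRv n k' ω, c.Srv n ω))
      (fun ω => (c.WleRv ((k : ℕ) + 1) ω, ω.2))
      = (pirP K L X F).condH (c.AexcRv n k')
          (fun ω => (c.Srv n ω, (c.WleRv ((k : ℕ) + 1) ω, ω.2)))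
        + (pirP K L X F).condH (c.Srv n)
          (fun ω => (c.WleRv ((k : ℕ) + 1) ω, ω.2)) :=
    fun k' => (pirP K L X F).condH_chain (c.AexcRv n k') (c.Srv n)
      (fun ω => (c.WleRv ((k : ℕ) + 1) ω, ω.2))
  -- (3) subadditivity for the excluded answers at k+1
  have hsub : (pirP K L X F).condH (c.AexcRv n ⟨(k : ℕ) + 1, hk⟩)
      (fun ω => (c.Srv n ω, (c.WleRv ((k : ℕ) + 1) ω, ω.2)))
      ≤ ∑ n' ∈ Finset.univ.erase n, (pirP K L X F).condH (c.Arv n' ⟨(k : ℕ) + 1, hk⟩)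
        (fun ω => (c.Srv n ω, (c.WleRv ((k : ℕ) + 1) ω, ω.2))) := by
    have heq : (pirP K L X F).condH (c.AexcRv n ⟨(k : ℕ) + 1, hk⟩)
        (fun ω => (c.Srv n ω, (c.WleRv ((k : ℕ) + 1) ω, ω.2)))
        = (pirP K L X F).condH
          (fun ω => (Finset.univ.erase n).toList.map
            (fun n' => c.Arv n' ⟨(k : ℕ) + 1, hk⟩ ω))
          (fun ω => (c.Srv n ω, (c.WleRv ((k : ℕ) + 1) ω, ω.2))) := by
      apply (pirP K L X F).condH_eq_of_determines
      · intro ω ω' h _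
        apply List.map_congr_left
        intro n' hn'
        have hn'n : n' ≠ n := (Finset.mem_erase.1 (Finset.mem_toList.1 hn')).1
        have := congrFun h n'
        simp only [AexcRv, if_neg hn'n, Option.some.injEq] at this
        exact this
      · intro ω ω' h _
        funext n'
        simp only [AexcRv]
        by_cases hn'n : n' = n
        · rw [if_pos hn'n, if_pos hn'n]
        · rw [if_neg hn'n, if_neg hn'n]
          have := List.map_inj_left.1 h n'
            (Finset.mem_toList.2 (Finset.mem_erase.2 ⟨hn'n, Finset.mem_univ n'⟩))
          rw [this]
    rw [heq]
    exact (pirP K L X F).condH_finset_le _ _ _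
  -- (4) swap under the (S_n, W, F) conditioning
  have hswapD : ∀ n' : Fin N, (pirP K L X F).condH (c.Arv n' ⟨(k : ℕ) + 1, hk⟩)
      (fun ω => (c.Srv n ω, (c.WleRv ((k : ℕ) + 1) ω, ω.2)))
      = (pirP K L X F).condH (c.Arv n' k)
        (fun ω => (c.Srv n ω, (c.WleRv ((k : ℕ) + 1) ω, ω.2))) := by
    intro n'
    have hreshape : ∀ kk : Fin K, (pirP K L X F).condH (c.Arv n' kk)
        (fun ω => (c.Srv n ω, (c.WleRv ((k : ℕ) + 1) ω, ω.2)))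
        = (pirP K L X F).condH (c.Arv n' kk)
          (fun ω => ((c.store n ω.1,
            (fun i : Fin K => if (i : ℕ) < (k : ℕ) + 1 then some (ω.1 i) else none)), ω.2)) := by
      intro kk
      apply (pirP K L X F).condH_congr_cond
      · intro ω ω' h
        obtain ⟨h1, hrest⟩ := Prod.mk.inj h
        obtain ⟨h2, h3⟩ := Prod.mk.inj hrest
        rw [Prod.ext_iff, Prod.ext_iff]
        exact ⟨⟨h1, h2⟩, h3⟩
      · intro ω ω' h
        obtain ⟨hpair, h3⟩ := Prod.mk.inj h
        obtain ⟨h1, h2⟩ := Prod.mk.inj hpair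
        rw [Prod.ext_iff, Prod.ext_iff]
        exact ⟨h1, h2, h3⟩
    rw [hreshape ⟨(k : ℕ) + 1, hk⟩, hreshape k]
    exact c.condH_swap n' k ⟨(k : ℕ) + 1, hk⟩
      (fun w => (c.store n w,
        (fun i : Fin K => if (i : ℕ) < (k : ℕ) + 1 then some (w i) else none)))
  -- (6) the ν-term is dominated by the excluded-answer entropy at level k
  have hν6 : (pirP K L X F).condH (c.Arv ν k)
      (fun ω => (c.Srv n ω, (c.WleRv ((k : ℕ) + 1) ω, ω.2)))
      ≤ (pirP K L X F).condH (c.AexcRv n k)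
        (fun ω => (c.Srv n ω, (c.WleRv ((k : ℕ) + 1) ω, ω.2))) := by
    apply (pirP K L X F).condH_le_of_determines (Z₁ := c.AexcRv n k)
    intro ω ω' h _
    have := congrFun h ν
    simp only [AexcRv, if_neg hνn, Option.some.injEq] at this
    exact this
  -- (7) remaining singles bounded by T - H(A_n^{[k+1]} | W, F)
  have h7 : ∀ n' : Fin N, (pirP K L X F).condH (c.Arv n' k)
      (fun ω => (c.Srv n ω, (c.WleRv ((k : ℕ) + 1) ω, ω.2)))
      ≤ c.T k - (pirP K L X F).condH (c.Arv n ⟨(k : ℕ) + 1, hk⟩)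
          (fun ω => (c.WleRv ((k : ℕ) + 1) ω, ω.2)) := by
    intro n'
    have ha : (pirP K L X F).condH (c.Arv n' k)
        (fun ω => (c.Srv n ω, (c.WleRv ((k : ℕ) + 1) ω, ω.2)))
        ≤ (pirP K L X F).condH (c.Arv n' k)
          (fun ω => (c.Arv n k ω, (c.WleRv ((k : ℕ) + 1) ω, ω.2))) := by
      apply (pirP K L X F).condH_mono_cond
      intro ω ω' h
      obtain ⟨h1, hrest⟩ := Prod.mk.inj h
      obtain ⟨h2, h3⟩ := Prod.mk.inj hrest
      rw [Prod.ext_iff, Prod.ext_iff]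
      refine ⟨?_, h2, h3⟩
      show List.ofFn (c.answer n (c.query n k ω.2) (c.store n ω.1)) = _
      rw [show ω.2 = ω'.2 from h3, show c.store n ω.1 = c.store n ω'.1 from h1]
      rfl
    have hb : (pirP K L X F).condH (c.Arv n' k)
        (fun ω => (c.Arv n k ω, (c.WleRv ((k : ℕ) + 1) ω, ω.2)))
        ≤ (pirP K L X F).condH (c.AallRv k)
          (fun ω => (c.Arv n k ω, (c.WleRv ((k : ℕ) + 1) ω, ω.2))) :=
      (pirP K L X F).condH_le_of_determines _ (fun ω ω' h _ => congrFun h n')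
    have hc1 : (pirP K L X F).condH
        (fun ω => (c.AallRv k ω, c.Arv n k ω))
        (fun ω => (c.WleRv ((k : ℕ) + 1) ω, ω.2))
        = (pirP K L X F).condH (c.AallRv k)
            (fun ω => (c.Arv n k ω, (c.WleRv ((k : ℕ) + 1) ω, ω.2)))
          + (pirP K L X F).condH (c.Arv n k)
            (fun ω => (c.WleRv ((k : ℕ) + 1) ω, ω.2)) :=
      (pirP K L X F).condH_chain _ _ _
    have hc2 : (pirP K L X F).condH
        (fun ω => (c.AallRv k ω, c.Arv n k ω))
        (fun ω => (c.WleRv ((k : ℕ) + 1) ω, ω.2)) = c.T k := by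
      apply (pirP K L X F).condH_eq_of_determines
      · intro ω ω' h _
        exact (Prod.mk.inj h).1
      · intro ω ω' h _
        rw [Prod.ext_iff]
        exact ⟨h, congrFun h n⟩
    have hd : (pirP K L X F).condH (c.Arv n k)
        (fun ω => (c.WleRv ((k : ℕ) + 1) ω, ω.2))
        = (pirP K L X F).condH (c.Arv n ⟨(k : ℕ) + 1, hk⟩)
          (fun ω => (c.WleRv ((k : ℕ) + 1) ω, ω.2)) :=
      (c.swapC k ⟨(k : ℕ) + 1, hk⟩ ((k : ℕ) + 1) n).symm
    linarith
  -- assemble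
  have hcard : ((Finset.univ.erase n).erase ν).card = N - 2 := by
    rw [Finset.card_erase_of_mem (Finset.mem_erase.2 ⟨hνn, Finset.mem_univ ν⟩),
      Finset.card_erase_of_mem (Finset.mem_univ n), Finset.card_univ, Fintype.card_fin]
    omega
  have hsplit : (∑ n' ∈ Finset.univ.erase n, (pirP K L X F).condH (c.Arv n' k)
      (fun ω => (c.Srv n ω, (c.WleRv ((k : ℕ) + 1) ω, ω.2))))
      = (pirP K L X F).condH (c.Arv ν k)
          (fun ω => (c.Srv n ω, (c.WleRv ((k : ℕ) + 1) ω, ω.2)))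
        + ∑ n' ∈ (Finset.univ.erase n).erase ν, (pirP K L X F).condH (c.Arv n' k)
          (fun ω => (c.Srv n ω, (c.WleRv ((k : ℕ) + 1) ω, ω.2))) :=
    (Finset.add_sum_erase _ _ (Finset.mem_erase.2 ⟨hνn, Finset.mem_univ ν⟩)).symm
  have hrest : (∑ n' ∈ (Finset.univ.erase n).erase ν, (pirP K L X F).condH (c.Arv n' k)
      (fun ω => (c.Srv n ω, (c.WleRv ((k : ℕ) + 1) ω, ω.2))))
      ≤ ((N : ℝ) - 2) * (c.T k - (pirP K L X F).condH (c.Arv n ⟨(k : ℕ) + 1, hk⟩)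
          (fun ω => (c.WleRv ((k : ℕ) + 1) ω, ω.2))) := by
    calc (∑ n' ∈ (Finset.univ.erase n).erase ν, (pirP K L X F).condH (c.Arv n' k)
        (fun ω => (c.Srv n ω, (c.WleRv ((k : ℕ) + 1) ω, ω.2))))
        ≤ ∑ _n' ∈ (Finset.univ.erase n).erase ν,
            (c.T k - (pirP K L X F).condH (c.Arv n ⟨(k : ℕ) + 1, hk⟩)
              (fun ω => (c.WleRv ((k : ℕ) + 1) ω, ω.2))) :=
          Finset.sum_le_sum fun n' _ => h7 n'
      _ = ((N : ℝ) - 2) * (c.T k - (pirP K L X F).condH (c.Arv n ⟨(k : ℕ) + 1, hk⟩)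
            (fun ω => (c.WleRv ((k : ℕ) + 1) ω, ω.2))) := by
          rw [Finset.sum_const, hcard, nsmul_eq_mul, Nat.cast_sub (by omega)]
          norm_num
  have hsum_swapped : (∑ n' ∈ Finset.univ.erase n,
      (pirP K L X F).condH (c.Arv n' ⟨(k : ℕ) + 1, hk⟩)
        (fun ω => (c.Srv n ω, (c.WleRv ((k : ℕ) + 1) ω, ω.2))))
      = ∑ n' ∈ Finset.univ.erase n, (pirP K L X F).condH (c.Arv n' k)
        (fun ω => (c.Srv n ω, (c.WleRv ((k : ℕ) + 1) ω, ω.2))) :=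
    Finset.sum_congr rfl fun n' _ => hswapD n'
  have hVk : c.Vnk n k = (pirP K L X F).condH (c.AexcRv n k)
      (fun ω => (c.Srv n ω, (c.WleRv ((k : ℕ) + 1) ω, ω.2)))
      + (pirP K L X F).condH (c.Srv n)
        (fun ω => (c.WleRv ((k : ℕ) + 1) ω, ω.2)) := hchain k
  have hVk1 : (L : ℝ) * Real.logb 2 (Fintype.card X) + c.Vnk n ⟨(k : ℕ) + 1, hk⟩
      = (pirP K L X F).condH (c.AexcRv n ⟨(k : ℕ) + 1, hk⟩)
        (fun ω => (c.Srv n ω, (c.WleRv ((k : ℕ) + 1) ω, ω.2)))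
      + (pirP K L X F).condH (c.Srv n)
        (fun ω => (c.WleRv ((k : ℕ) + 1) ω, ω.2)) := by
    rw [← hid1]
    exact hchain ⟨(k : ℕ) + 1, hk⟩
  rw [hsum_swapped] at hsub
  rw [hsplit] at hsub
  linarith

/-- The V-recursion ("diamond"): N L' + Σ V^{k+1} ≤ Σ V^k + (N-2)(N T^k - L' - T^{k+1}). -/
lemma diamond (c : PIRCode N K L X Y F Q S) (hN : 3 ≤ N) (k : Fin K)
    (hk : (k : ℕ) + 1 < K) :
    (N : ℝ) * ((L : ℝ) * Real.logb 2 (Fintype.card X))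
        + ∑ n : Fin N, c.Vnk n ⟨(k : ℕ) + 1, hk⟩
      ≤ (∑ n : Fin N, c.Vnk n k)
        + ((N : ℝ) - 2) * ((N : ℝ) * c.T k
            - (L : ℝ) * Real.logb 2 (Fintype.card X) - c.T ⟨(k : ℕ) + 1, hk⟩) := by
  classical
  have hper := fun n : Fin N => c.per_n hN k hk n
  have hsum := Finset.sum_le_sum fun n (_ : n ∈ Finset.univ) => hper n
  rw [Finset.sum_add_distrib, Finset.sum_add_distrib, Finset.sum_const,
    Finset.card_univ, Fintype.card_fin, nsmul_eq_mul, ← Finset.mul_sum] at hsum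
  have hs : ((L : ℝ)) * Real.logb 2 (Fintype.card X) + c.T ⟨(k : ℕ) + 1, hk⟩
      ≤ ∑ n : Fin N, (pirP K L X F).condH (c.Arv n ⟨(k : ℕ) + 1, hk⟩)
        (fun ω => (c.WleRv ((k : ℕ) + 1) ω, ω.2)) := c.sum_singles_ge k hk
  have hN2 : (0:ℝ) ≤ (N : ℝ) - 2 := by
    have : (3:ℝ) ≤ (N : ℝ) := by exact_mod_cast hN
    linarith
  have hdist2 : (∑ n : Fin N, (c.T k
      - (pirP K L X F).condH (c.Arv n ⟨(k : ℕ) + 1, hk⟩)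
        (fun ω => (c.WleRv ((k : ℕ) + 1) ω, ω.2))))
      = (N : ℝ) * c.T k
        - ∑ n : Fin N, (pirP K L X F).condH (c.Arv n ⟨(k : ℕ) + 1, hk⟩)
          (fun ω => (c.WleRv ((k : ℕ) + 1) ω, ω.2)) := by
    rw [Finset.sum_sub_distrib, Finset.sum_const, Finset.card_univ,
      Fintype.card_fin, nsmul_eq_mul]
  have heq3 : ((N : ℝ) - 2) * (∑ n : Fin N, (c.T k
      - (pirP K L X F).condH (c.Arv n ⟨(k : ℕ) + 1, hk⟩)
        (fun ω => (c.WleRv ((k : ℕ) + 1) ω, ω.2))))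
      = ((N : ℝ) - 2) * ((N : ℝ) * c.T k
        - ∑ n : Fin N, (pirP K L X F).condH (c.Arv n ⟨(k : ℕ) + 1, hk⟩)
          (fun ω => (c.WleRv ((k : ℕ) + 1) ω, ω.2))) := by rw [hdist2]
  have hmono : ((N : ℝ) - 2) * ((N : ℝ) * c.T k
      - ∑ n : Fin N, (pirP K L X F).condH (c.Arv n ⟨(k : ℕ) + 1, hk⟩)
        (fun ω => (c.WleRv ((k : ℕ) + 1) ω, ω.2)))
      ≤ ((N : ℝ) - 2) * ((N : ℝ) * c.T k
        - (L : ℝ) * Real.logb 2 (Fintype.card X) - c.T ⟨(k : ℕ) + 1, hk⟩) := by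
    apply mul_le_mul_of_nonneg_left _ hN2
    linarith
  linarith

end PIRCode

namespace PIRCode

variable {N K L : ℕ} {X Y F : Type} {Q S : Fin N → Type}
  [Fintype X] [Nonempty X] [Fintype Y] [Fintype F] [Nonempty F]
  [∀ n, Fintype (Q n)] [∀ n, Fintype (S n)]

lemma Vnk_nonneg (c : PIRCode N K L X Y F Q S) (n : Fin N) (k : Fin K) :
    0 ≤ c.Vnk n k := (pirP K L X F).condH_nonneg _ _

lemma T_nonneg (c : PIRCode N K L X Y F Q S) (k : Fin K) :
    0 ≤ c.T k := (pirP K L X F).condH_nonneg _ _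

/-- The key downward induction. -/
lemma CL (c : PIRCode N K L X Y F Q S) (hN : 3 ≤ N) :
    ∀ m : ℕ, ∀ k : Fin K, (k : ℕ) + m = K - 1 →
    ((N : ℝ) - 2) * (∑ i ∈ Finset.range m, (N : ℝ) ^ i)
        * ((L : ℝ) * Real.logb 2 (Fintype.card X))
      + (N : ℝ) * m * ((L : ℝ) * Real.logb 2 (Fintype.card X))
      ≤ (∑ n : Fin N, c.Vnk n k) + ((N : ℝ) - 2) * (N : ℝ) ^ m * c.T k := by
  have hN3 : (3:ℝ) ≤ (N : ℝ) := by exact_mod_cast hN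
  have hD : (0:ℝ) ≤ (N : ℝ) - 2 := by linarith
  intro m
  induction m with
  | zero =>
    intro k _
    have hV : 0 ≤ ∑ n : Fin N, c.Vnk n k :=
      Finset.sum_nonneg fun n _ => c.Vnk_nonneg n k
    have hT := c.T_nonneg k
    simp only [Finset.range_zero, Finset.sum_empty, Nat.cast_zero, pow_zero]
    nlinarith
  | succ m ih =>
    intro k hkm
    have hk : (k : ℕ) + 1 < K := by omega
    have hkm1 : ((⟨(k : ℕ) + 1, hk⟩ : Fin K) : ℕ) + m = K - 1 := by
      show (k : ℕ) + 1 + m = K - 1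
      omega
    have IH := ih ⟨(k : ℕ) + 1, hk⟩ hkm1
    have hdia := c.diamond hN k hk
    have hTrec := c.T_rec k hk
    have hpow1 : (1:ℝ) ≤ (N : ℝ) ^ m := one_le_pow₀ (by linarith)
    have h1 : ((N : ℝ) - 2) * (N : ℝ) ^ (m + 1) * c.T k
        = ((N : ℝ) - 2) * (N : ℝ) ^ m * ((L : ℝ) * Real.logb 2 (Fintype.card X))
          + ((N : ℝ) - 2) * (N : ℝ) ^ m * c.T ⟨(k : ℕ) + 1, hk⟩
          + ((N : ℝ) - 2) * (N : ℝ) ^ m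
            * ((N : ℝ) * c.T k - (L : ℝ) * Real.logb 2 (Fintype.card X)
                - c.T ⟨(k : ℕ) + 1, hk⟩) := by
      rw [pow_succ]
      ring
    have h2 : 0 ≤ ((N : ℝ) - 2) * ((N : ℝ) ^ m - 1)
        * ((N : ℝ) * c.T k - (L : ℝ) * Real.logb 2 (Fintype.card X)
            - c.T ⟨(k : ℕ) + 1, hk⟩) := by
      apply mul_nonneg (mul_nonneg hD (by linarith))
      linarith
    rw [Finset.sum_range_succ]
    push_cast
    nlinarith [IH, hdia, h1, h2]

end PIRCode


/-- The induction bound: for N ≥ 3 and every k ∈ {1,…,K-1} (0-indexed: k+1 < K),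
V^k/(N-2) + N^{K-k-1}·T^k ≥ ((N^{K-k}-1)/(N(N-1)))·L log₂|X| + ((K-k)/(N-2))·L log₂|X|,
where the paper's (1-indexed) k corresponds to the 0-indexed value k+1. -/
theorem TV_induction_bound
{N K L : ℕ} {X Y F : Type} {Q S : Fin N → Type}
    [Fintype X] [Nonempty X] [Fintype Y] [Fintype F] [Nonempty F]
    [∀ n, Fintype (Q n)] [∀ n, Fintype (S n)]
    (c : PIRCode N K L X Y F Q S) (hN : 3 ≤ N) (k : Fin K) (hk : (k : ℕ) + 1 < K) :
    c.Vavg k / ((N : ℝ) - 2) + (N : ℝ) ^ (K - ((k : ℕ) + 1) - 1) * c.T k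
      ≥ (((N : ℝ) ^ (K - ((k : ℕ) + 1)) - 1) / ((N : ℝ) * ((N : ℝ) - 1)))
            * (L * Real.logb 2 (Fintype.card X))
        + ((K - ((k : ℕ) + 1) : ℕ) : ℝ) / ((N : ℝ) - 2)
            * (L * Real.logb 2 (Fintype.card X)) := by
  classical
  set m : ℕ := K - ((k : ℕ) + 1) with hm
  have hm1 : 1 ≤ m := by omega
  have hkm : (k : ℕ) + m = K - 1 := by omega
  have key := c.CL hN m k hkm
  have hN3 : (3:ℝ) ≤ (N : ℝ) := by exact_mod_cast hN
  have hNpos : (0:ℝ) < (N : ℝ) := by linarith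
  have hD : (0:ℝ) < (N : ℝ) - 2 := by linarith
  have hN1 : (N : ℝ) - 1 ≠ 0 := by linarith
  have hN1' : (N : ℝ) ≠ 1 := by linarith
  have hgeom : (∑ i ∈ Finset.range m, (N : ℝ) ^ i)
      = ((N : ℝ) ^ m - 1) / ((N : ℝ) - 1) := geom_sum_eq hN1' m
  have hpow : (N : ℝ) ^ m = (N : ℝ) * (N : ℝ) ^ (m - 1) := by
    conv_lhs => rw [show m = (m - 1) + 1 by omega]
    rw [pow_succ]
    ring
  have hdiv := div_le_div_of_nonneg_right key
    (le_of_lt (by positivity : (0:ℝ) < (N : ℝ) * ((N : ℝ) - 2)))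
  have e1 : ((∑ n : Fin N, c.Vnk n k) + ((N : ℝ) - 2) * (N : ℝ) ^ m * c.T k)
      / ((N : ℝ) * ((N : ℝ) - 2))
      = c.Vavg k / ((N : ℝ) - 2) + (N : ℝ) ^ (m - 1) * c.T k := by
    have hVavg : c.Vavg k = (∑ n : Fin N, c.Vnk n k) / (N : ℝ) := rfl
    rw [hVavg, hpow]
    field_simp
  have e2 : (((N : ℝ) - 2) * (∑ i ∈ Finset.range m, (N : ℝ) ^ i)
        * ((L : ℝ) * Real.logb 2 (Fintype.card X))
      + (N : ℝ) * m * ((L : ℝ) * Real.logb 2 (Fintype.card X)))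
      / ((N : ℝ) * ((N : ℝ) - 2))
      = (((N : ℝ) ^ m - 1) / ((N : ℝ) * ((N : ℝ) - 1)))
          * ((L : ℝ) * Real.logb 2 (Fintype.card X))
        + (m : ℝ) / ((N : ℝ) - 2) * ((L : ℝ) * Real.logb 2 (Fintype.card X)) := by
    rw [hgeom]
    field_simp
  rw [ge_iff_le]
  rw [e1] at hdiv
  rw [e2] at hdiv
  exact hdiv
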